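/- arXiv:2204.01624 — 5 statements merged into one kernel-verified Lean document; each statement's English description precedes it below -/
import Mathlib

section
/- Let k be an algebraically closed field, w = (q_0, …, q_n) a tuple of positive integer weights, and d = gcd(q_0, …, q_n). Then for all x, y ∈ k^{n+1} \ {0}, there exists λ ∈ k^* with y_i = λ^{q_i} x_i for all i if and only if there exists μ ∈ k^* with y_i = μ^{q_i/d} x_i for all i. Consequently the identity map of k^{n+1} \ {0} induces a bijection WP_w^n(k) → WP_{w'}^n(k), where w' = (q_0/d, …, q_n/d) is a reduced tuple of weights; in particular every weighted projective space over k is (as a set of points) identical to one with reduced weights. (This is the point-level content of the isomorphism WP_w^n(k) ≅ WP_{w'}^n(k) of Proposition: reduction, part (i).) -/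
theorem exists_pow_mul_iff_exists_pow_div_mul {ι k : Type*} [Field k] [IsAlgClosed k]
    {q : ι → ℕ} {d : ℕ} (hd : ∀ i, d ∣ q i) (x y : ι → k) :
    (∃ lam : k, lam ≠ 0 ∧ ∀ i, y i = lam ^ q i * x i) ↔
    (∃ mu : k, mu ≠ 0 ∧ ∀ i, y i = mu ^ (q i / d) * x i) := by
  have pow_pow_div (lam : k) (i : ι) : (lam ^ d) ^ (q i / d) = lam ^ q i := by
    rw [← pow_mul, Nat.mul_div_cancel' (hd i)]
  constructor
  · rintro ⟨lam, hlam, h⟩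
    exact ⟨lam ^ d, pow_ne_zero _ hlam, fun i => by rw [pow_pow_div, h i]⟩
  · rintro ⟨mu, hmu, h⟩
    obtain rfl | hd0 := eq_or_ne d 0
    -- `0 ∣ q i` forces `q i = 0 = q i / 0`, so `mu` itself is a witness.
    · refine ⟨mu, hmu, fun i => ?_⟩
      rw [h i, zero_dvd_iff.mp (hd i), Nat.div_zero]
    · obtain ⟨lam, rfl⟩ := IsAlgClosed.exists_pow_nat_eq mu (Nat.pos_of_ne_zero hd0)
      refine ⟨lam, fun hlam => hmu (by rw [hlam, zero_pow hd0]), fun i => ?_⟩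
      rw [h i, pow_pow_div]

theorem weighted_equiv_iff_reduced_weighted_equiv_general
    {k : Type*} [Field k] [IsAlgClosed k] {n : ℕ}
    (q : Fin (n + 1) → ℕ)
    (d : ℕ) (hd : d = Finset.univ.gcd q)
    (x y : Fin (n + 1) → k) :
    (∃ lam : k, lam ≠ 0 ∧ ∀ i, y i = lam ^ q i * x i) ↔
    (∃ mu : k, mu ≠ 0 ∧ ∀ i, y i = mu ^ (q i / d) * x i) :=
  exists_pow_mul_iff_exists_pow_div_mul (fun i => hd ▸ Finset.gcd_dvd (Finset.mem_univ i)) x y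

/-- Over an algebraically closed field, with `d = gcd(q_0, …, q_n)`, two nonzero tuples are
equivalent under the weighted scaling action for the weights `(q_0, …, q_n)` iff they are
equivalent under the weighted scaling action for the reduced weights `(q_0/d, …, q_n/d)`.
Hence the identity map induces a bijection `WP_w^n(k) → WP_{w'}^n(k)` with `w'` reduced. -/
theorem weighted_equiv_iff_reduced_weighted_equiv
    {k : Type*} [Field k] [IsAlgClosed k] {n : ℕ}
    (q : Fin (n + 1) → ℕ) (hq : ∀ i, 0 < q i)
    (d : ℕ) (hd : d = Finset.univ.gcd q)
    (x y : Fin (n + 1) → k) (hx : x ≠ 0) (hy : y ≠ 0) :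
    (∃ lam : k, lam ≠ 0 ∧ ∀ i, y i = lam ^ q i * x i) ↔
    (∃ mu : k, mu ≠ 0 ∧ ∀ i, y i = mu ^ (q i / d) * x i) :=
  weighted_equiv_iff_reduced_weighted_equiv_general q d hd x y
end

section
/- Let k be an algebraically closed field and w = (q_0, …, q_n) positive integer weights with gcd(q_0, …, q_n) = 1. Fix an index i and let d_i = gcd(q_0, …, q̂_i, …, q_n) (the gcd of the weights omitting q_i), and let w' = (q_0/d_i, …, q_{i-1}/d_i, q_i, q_{i+1}/d_i, …, q_n/d_i). Then the map k^{n+1} \ {0} → k^{n+1} \ {0} sending (x_0, …, x_n) to (x_0, …, x_{i-1}, x_i^{d_i}, x_{i+1}, …, x_n) induces a well-defined bijection WP_w^n(k) → WP_{w'}^n(k). (This is the point-level content of Proposition: reduction, part (ii).) -/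
/-! Off the `i`-th coordinate the weights `w` are `d` times the weights `w'`, so `λ ⋆_w x`
is sent to `λ^d ⋆_{w'} F x`. Conversely, over an algebraically closed field every scalar is a
`d`-th power `λ^d`, with `λ` determined up to a `d`-th root of unity `η`; since `q_i` is coprime
to `d`, `η ↦ η^{q_i}` permutes the `d`-th roots of unity, so `η` can be chosen to match the
`i`-th coordinates, whose `d`-th powers already agree. Surjectivity is the existence of `d`-th
roots. If `n = 0` then `d = 0` and both spaces are a single point. -/

/-- The weighted scaling relation on `k^{n+1}`: `y = λ ⋆ x` for some `λ ∈ k^*`, where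
`(λ ⋆ x)_i = λ^{q_i} x_i`.  The weighted projective space `WP_q^n(k)` is the quotient of
`k^{n+1} \ {0}` by this relation. -/
def wrel {k : Type*} [Field k] {n : ℕ} (q : Fin (n + 1) → ℕ) (x y : Fin (n + 1) → k) : Prop :=
  ∃ lam : k, lam ≠ 0 ∧ ∀ i, y i = lam ^ q i * x i

open Function

theorem Finset.coprime_gcd_erase_of_gcd_eq_one {ι : Type*} [DecidableEq ι] {s : Finset ι}
    {f : ι → ℕ} {i : ι} (hs : s.gcd f = 1) (hi : i ∈ s) :
    (f i).Coprime ((s.erase i).gcd f) := by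
  rwa [← Finset.insert_erase hi, Finset.gcd_insert] at hs

theorem exists_pow_eq_one_and_pow_eq_of_coprime {M : Type*} [Monoid M] {ζ : M} {m d : ℕ}
    (hζ : ζ ^ d = 1) (hmd : m.Coprime d) : ∃ η : M, η ^ d = 1 ∧ η ^ m = ζ := by
  obtain ⟨a, ha⟩ :=
    exists_pow_eq_self_of_coprime (hmd.coprime_dvd_right (orderOf_dvd_of_pow_eq_one hζ))
  exact ⟨ζ ^ a, by rw [← pow_mul, mul_comm, pow_mul, hζ, one_pow],
    by rw [← pow_mul, mul_comm, pow_mul, ha]⟩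

theorem exists_pow_eq_one_and_pow_mul_eq_of_pow_eq_pow {G : Type*} [CommGroupWithZero G]
    {a b : G} {m d : ℕ} (hd : d ≠ 0) (hmd : m.Coprime d) (hab : a ^ d = b ^ d) :
    ∃ η : G, η ^ d = 1 ∧ η ^ m * a = b := by
  rcases eq_or_ne a 0 with rfl | ha
  · rw [zero_pow hd, eq_comm, pow_eq_zero_iff hd] at hab
    exact ⟨1, one_pow d, by rw [hab, mul_zero]⟩
  · obtain ⟨η, hη, hηm⟩ := exists_pow_eq_one_and_pow_eq_of_coprime (ζ := b / a)
      (by rw [div_pow, ← hab, div_self (pow_ne_zero d ha)]) hmd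
    exact ⟨η, hη, by rw [hηm, div_mul_cancel₀ b ha]⟩

section powAt

variable {ι M : Type*} [DecidableEq ι]

def powAt [Monoid M] (i : ι) (d : ℕ) (x : ι → M) : ι → M :=
  update x i (x i ^ d)

@[simp]
theorem powAt_self [Monoid M] (i : ι) (d : ℕ) (x : ι → M) : powAt i d x i = x i ^ d :=
  update_self ..

@[simp]
theorem powAt_of_ne [Monoid M] {i j : ι} (h : j ≠ i) (d : ℕ) (x : ι → M) :
    powAt i d x j = x j :=
  update_of_ne h ..

theorem powAt_ne_zero [MonoidWithZero M] [NoZeroDivisors M] {x : ι → M} (hx : x ≠ 0) (i : ι)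
    (d : ℕ) : powAt i d x ≠ 0 := by
  contrapose! hx
  funext j
  rcases eq_or_ne j i with rfl | hj
  · exact eq_zero_of_pow_eq_zero (by simpa using congrFun hx j)
  · simpa [hj] using congrFun hx j

theorem powAt_surjective {K : Type*} [Field K] [IsAlgClosed K] (i : ι) {d : ℕ} (hd : 0 < d) :
    Surjective (powAt i d : (ι → K) → ι → K) := by
  intro z
  obtain ⟨r, hr⟩ := IsAlgClosed.exists_pow_nat_eq (z i) hd
  refine ⟨update z i r, funext fun j => ?_⟩
  rcases eq_or_ne j i with rfl | hj
  · simp [hr]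
  · simp [hj]

end powAt

section wrel

variable {k : Type*} [Field k] {n : ℕ} {q q' : Fin (n + 1) → ℕ} {i : Fin (n + 1)} {d : ℕ}
  {x y : Fin (n + 1) → k}

theorem wrel_refl (q : Fin (n + 1) → ℕ) (x : Fin (n + 1) → k) : wrel q x x :=
  ⟨1, one_ne_zero, fun j => by rw [one_pow, one_mul]⟩

theorem wrel_of_forall_eq (hi : ∀ j, j = i) (hqi : q i = 1) (hx : x ≠ 0) (hy : y ≠ 0) :
    wrel q x y := by
  have hxi : x i ≠ 0 := fun h => hx (funext fun j => hi j ▸ h)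
  have hyi : y i ≠ 0 := fun h => hy (funext fun j => hi j ▸ h)
  exact ⟨y i / x i, div_ne_zero hyi hxi, fun j => by
    rw [hi j, hqi, pow_one, div_mul_cancel₀ _ hxi]⟩

theorem wrel.powAt (hq'i : q' i = q i) (hq' : ∀ j ≠ i, q j = q' j * d) (h : wrel q x y) :
    wrel q' (powAt i d x) (powAt i d y) := by
  obtain ⟨lam, hlam, hxy⟩ := h
  refine ⟨lam ^ d, pow_ne_zero d hlam, fun j => ?_⟩
  rcases eq_or_ne j i with rfl | hj
  · rw [powAt_self, powAt_self, hxy, hq'i, mul_pow, ← pow_mul, ← pow_mul, mul_comm (q j) d]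
  · rw [powAt_of_ne hj, powAt_of_ne hj, hxy, ← pow_mul, hq' j hj, mul_comm (q' j) d]

theorem wrel_of_wrel_powAt [IsAlgClosed k] (hd : 0 < d) (hcop : (q i).Coprime d)
    (hq'i : q' i = q i) (hq' : ∀ j ≠ i, q j = q' j * d)
    (h : wrel q' (powAt i d x) (powAt i d y)) : wrel q x y := by
  obtain ⟨mu, hmu, hxy⟩ := h
  obtain ⟨lam, rfl⟩ := IsAlgClosed.exists_pow_nat_eq mu hd
  have hlam : lam ≠ 0 := ne_zero_pow hd.ne' hmu
  have hoff : ∀ j ≠ i, y j = lam ^ q j * x j := fun j hj => by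
    simpa [hj, ← pow_mul, mul_comm d, ← hq' j hj] using hxy j
  have hpow : (lam ^ q i * x i) ^ d = y i ^ d := by
    rw [← powAt_self i d y, hxy, hq'i, powAt_self, mul_pow, ← pow_mul, ← pow_mul,
      mul_comm (q i) d]
  obtain ⟨η, hη, hηy⟩ := exists_pow_eq_one_and_pow_mul_eq_of_pow_eq_pow hd.ne' hcop hpow
  have hη0 : η ≠ 0 := by rintro rfl; simp [zero_pow hd.ne'] at hη
  refine ⟨η * lam, mul_ne_zero hη0 hlam, fun j => ?_⟩
  rcases eq_or_ne j i with rfl | hj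
  · rw [mul_pow, mul_assoc, hηy]
  · have hηj : η ^ q j = 1 := by rw [hq' j hj, mul_comm, pow_mul, hη, one_pow]
    rw [mul_pow, hηj, one_mul, hoff j hj]

end wrel

/-- Let `k` be algebraically closed, `gcd(q_0, …, q_n) = 1`, `d_i` the gcd of the weights
omitting `q_i`, and `w' = (q_0/d_i, …, q_{i-1}/d_i, q_i, q_{i+1}/d_i, …, q_n/d_i)`.
Then `x ↦ (x_0, …, x_{i-1}, x_i^{d_i}, x_{i+1}, …, x_n)` maps nonzero tuples to nonzero
tuples, respects the weighted equivalences, and induces a well-defined bijection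
`WP_w^n(k) → WP_{w'}^n(k)` (well-definedness, injectivity and surjectivity on classes). -/
theorem weighted_truncation_induces_bijection
    {k : Type*} [Field k] [IsAlgClosed k] {n : ℕ}
    (q : Fin (n + 1) → ℕ) (hq : ∀ i, 0 < q i)
    (hred : Finset.univ.gcd q = 1) (i : Fin (n + 1))
    (d : ℕ) (hd : d = (Finset.univ.erase i).gcd q)
    (q' : Fin (n + 1) → ℕ) (hq' : ∀ j, q' j = if j = i then q i else q j / d)
    (F : (Fin (n + 1) → k) → (Fin (n + 1) → k))
    (hF : ∀ x, F x = Function.update x i (x i ^ d)) :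
    (∀ x : Fin (n + 1) → k, x ≠ 0 → F x ≠ 0) ∧
    (∀ x y : Fin (n + 1) → k, wrel q x y → wrel q' (F x) (F y)) ∧
    (∀ x y : Fin (n + 1) → k, x ≠ 0 → y ≠ 0 → wrel q' (F x) (F y) → wrel q x y) ∧
    (∀ z : Fin (n + 1) → k, z ≠ 0 → ∃ x : Fin (n + 1) → k, x ≠ 0 ∧ wrel q' (F x) z) := by
  obtain rfl : F = powAt i d := funext hF
  have hcop : (q i).Coprime d :=
    hd ▸ Finset.coprime_gcd_erase_of_gcd_eq_one hred (Finset.mem_univ i)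
  have hq'i : q' i = q i := by rw [hq' i, if_pos rfl]
  have hq'd : ∀ j ≠ i, q j = q' j * d := fun j hj => by
    rw [hq' j, if_neg hj, Nat.div_mul_cancel (hd ▸ Finset.gcd_dvd (by simp [hj]))]
  refine ⟨fun x hx => powAt_ne_zero hx i d, fun x y => wrel.powAt hq'i hq'd, ?_⟩
  rcases Nat.eq_zero_or_pos d with rfl | hdpos
  · have hall : ∀ j, j = i := fun j =>
      by_contra fun hj => (hq j).ne' (by simpa using hq'd j hj)
    have hqi : q i = 1 := Nat.coprime_zero_right _ |>.mp hcop
    exact ⟨fun x y hx hy _ => wrel_of_forall_eq hall hqi hx hy,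
      fun z hz =>
        ⟨z, hz, wrel_of_forall_eq hall (hq'i.trans hqi) (powAt_ne_zero hz i 0) hz⟩⟩
  · refine ⟨fun x y _ _ => wrel_of_wrel_powAt hdpos hcop hq'i hq'd, fun z hz => ?_⟩
    obtain ⟨x, rfl⟩ := powAt_surjective (K := k) i hdpos z
    exact ⟨x, fun hx => hz (by simp [hx, powAt, hdpos.ne']), wrel_refl q' _⟩
end

section
/- Let k be an algebraically closed field and w = (q_0, …, q_n) positive integer weights with gcd(q_0, …, q_n) = 1. Let m = lcm(q_0, …, q_n) and suppose the integers m/q_0, …, m/q_n are pairwise coprime. Then the Veronese map φ_m sending [x_0 : ⋯ : x_n] ∈ WP_w^n(k) to [x_0^{m/q_0} : ⋯ : x_n^{m/q_n}] ∈ P^n(k) is a well-defined bijection from the weighted projective space WP_w^n(k) onto the ordinary projective space P^n(k). (This is the point-level content of Proposition: reduction, part (iv).) -/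
theorem Nat.div_dvd_of_coprime_div {m a b : ℕ} (ha : a ∣ m) (hb : b ∣ m)
    (h : Nat.Coprime (m / a) (m / b)) : m / b ∣ a :=
  h.symm.dvd_of_dvd_mul_right (by rw [Nat.mul_div_cancel' ha]; exact Nat.div_dvd_of_dvd hb)

theorem Nat.coprime_of_forall_ne_dvd {ι : Type*} [Fintype ι] {q : ι → ℕ}
    (hq : Finset.univ.gcd q = 1) {j : ι} {c : ℕ} (h : ∀ i, i ≠ j → c ∣ q i) :
    Nat.Coprime (q j) c := by
  refine Nat.dvd_one.mp (hq ▸ Finset.dvd_gcd fun i _ => ?_)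
  by_cases hij : i = j
  · exact hij ▸ Nat.gcd_dvd_left _ _
  · exact (Nat.gcd_dvd_right _ _).trans (h i hij)

theorem exists_pow_eq_of_pow_eq_one {M ι : Type*} [CommMonoid M] (s : Finset ι)
    {d : ι → M} {q a : ι → ℕ} (hd : ∀ i ∈ s, d i ^ a i = 1)
    (hcop : ∀ i ∈ s, Nat.Coprime (q i) (a i))
    (hdvd : ∀ i ∈ s, ∀ j ∈ s, i ≠ j → a j ∣ q i) :
    ∃ l, ∀ i ∈ s, l ^ q i = d i := by
  let e : ι → ℕ := fun i => ((q i : ZMod (a i))⁻¹).val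
  have he : ∀ i ∈ s, d i ^ (q i * e i) = d i := fun i hi => by
    have hmod : q i * e i ≡ 1 [MOD a i] := by
      rw [← ZMod.natCast_eq_natCast_iff, Nat.cast_mul, Nat.cast_one]
      exact ZMod.mul_val_inv (hcop i hi)
    simpa using pow_eq_pow_of_modEq hmod (hd i hi)
  refine ⟨∏ j ∈ s, d j ^ e j, fun i hi => ?_⟩
  rw [← Finset.prod_pow, Finset.prod_eq_single_of_mem i hi]
  · rw [← pow_mul, mul_comm, he i hi]
  · intro j hj hji
    obtain ⟨c, hc⟩ := hdvd i hi j hj (Ne.symm hji)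
    rw [← pow_mul, hc, mul_left_comm, pow_mul, hd j hj, one_pow]

theorem wrel_of_pow_eq_mul_pow {k : Type*} [Field k] [IsAlgClosed k] {n m : ℕ}
    {q a : Fin (n + 1) → ℕ} (hm : 0 < m) (hqa : ∀ i, q i * a i = m)
    (hcop : ∀ i, Nat.Coprime (q i) (a i)) (hdvd : ∀ i j, i ≠ j → a j ∣ q i)
    {x y : Fin (n + 1) → k} (hx : x ≠ 0) {μ : k} (hμ : μ ≠ 0)
    (h : ∀ i, y i ^ a i = μ * x i ^ a i) : wrel q x y := by
  classical
  obtain ⟨ν, rfl⟩ := IsAlgClosed.exists_pow_nat_eq μ hm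
  have hν : ν ≠ 0 := by rintro rfl; exact hμ (zero_pow hm.ne')
  let s := Finset.univ.filter fun i => x i ≠ 0
  have hs : ∀ {i}, i ∈ s ↔ x i ≠ 0 := by simp [s]
  let d : Fin (n + 1) → k := fun i => y i / (ν ^ q i * x i)
  have hd : ∀ i ∈ s, d i ^ a i = 1 := fun i hi => by
    rw [div_pow, h i, mul_pow, ← pow_mul, hqa i, div_self]
    exact mul_ne_zero hμ (pow_ne_zero _ (hs.1 hi))
  obtain ⟨l, hl⟩ := exists_pow_eq_of_pow_eq_one s hd (fun i _ => hcop i)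
    fun i _ j _ => hdvd i j
  obtain ⟨i₀, hi₀⟩ := Function.ne_iff.1 hx
  have hl0 : l ≠ 0 := by
    rintro rfl
    have h1 := hd i₀ (hs.2 hi₀)
    rw [← hl i₀ (hs.2 hi₀), ← pow_mul, hqa i₀, zero_pow hm.ne'] at h1
    exact zero_ne_one h1
  refine ⟨ν * l, mul_ne_zero hν hl0, fun i => ?_⟩
  by_cases hxi : x i = 0
  · have ha : a i ≠ 0 := fun ha => by simp [ha, ← hqa i] at hm
    rw [hxi, mul_zero, ← pow_eq_zero_iff ha, h i, hxi, zero_pow ha, mul_zero]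
  · rw [mul_pow, hl i (hs.2 hxi)]
    simp only [d]
    field_simp

/-- Let `k` be algebraically closed, `gcd(q_0, …, q_n) = 1`, `m = lcm(q_0, …, q_n)`, and
suppose `m/q_0, …, m/q_n` are pairwise coprime.  Then the Veronese map
`[x_0 : ⋯ : x_n] ↦ [x_0^{m/q_0} : ⋯ : x_n^{m/q_n}]` is a well-defined bijection from
`WP_w^n(k)` onto `P^n(k)`: it maps nonzero tuples to nonzero tuples, respects the
equivalences, and is injective and surjective on equivalence classes. -/
theorem veronese_induces_bijection
    {k : Type*} [Field k] [IsAlgClosed k] {n : ℕ}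
    (q : Fin (n + 1) → ℕ) (hq : ∀ i, 0 < q i)
    (hred : Finset.univ.gcd q = 1)
    (m : ℕ) (hm : m = Finset.univ.lcm q)
    (hcop : ∀ i j : Fin (n + 1), i ≠ j → Nat.Coprime (m / q i) (m / q j))
    (F : (Fin (n + 1) → k) → (Fin (n + 1) → k))
    (hF : ∀ x j, F x j = x j ^ (m / q j)) :
    (∀ x : Fin (n + 1) → k, x ≠ 0 → F x ≠ 0) ∧
    (∀ x y : Fin (n + 1) → k, wrel q x y → wrel (fun _ => 1) (F x) (F y)) ∧
    (∀ x y : Fin (n + 1) → k, x ≠ 0 → y ≠ 0 →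
      wrel (fun _ => 1) (F x) (F y) → wrel q x y) ∧
    (∀ z : Fin (n + 1) → k, z ≠ 0 →
      ∃ x : Fin (n + 1) → k, x ≠ 0 ∧ wrel (fun _ => 1) (F x) z) := by
  have hqm : ∀ i, q i ∣ m := fun i => hm ▸ Finset.dvd_lcm (Finset.mem_univ i)
  have hm0 : 0 < m := Nat.pos_of_ne_zero fun h => by
    obtain ⟨i, -, hi⟩ := Finset.lcm_eq_zero_iff.1 (hm ▸ h)
    exact (hq i).ne' hi
  have hqa : ∀ i, q i * (m / q i) = m := fun i => Nat.mul_div_cancel' (hqm i)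
  have ha : ∀ i, 0 < m / q i := fun i => Nat.div_pos (Nat.le_of_dvd hm0 (hqm i)) (hq i)
  have hdvd : ∀ i j, i ≠ j → m / q j ∣ q i := fun i j hij =>
    Nat.div_dvd_of_coprime_div (hqm i) (hqm j) (hcop i j hij)
  refine ⟨fun x hx => ?_, ?_, ?_, fun z hz => ?_⟩
  · obtain ⟨i, hi⟩ := Function.ne_iff.1 hx
    exact Function.ne_iff.2 ⟨i, by rw [hF, Pi.zero_apply]; exact pow_ne_zero _ hi⟩
  · rintro x y ⟨l, hl, hxy⟩
    exact ⟨l ^ m, pow_ne_zero _ hl, fun i => by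
      simp only [hF, hxy i, mul_pow, ← pow_mul, hqa i, pow_one]⟩
  · rintro x y hx - ⟨μ, hμ, h⟩
    exact wrel_of_pow_eq_mul_pow hm0 hqa (fun j => Nat.coprime_of_forall_ne_dvd hred (hdvd · j))
      hdvd hx hμ fun i => by simpa [hF] using h i
  · choose x hx using fun j => IsAlgClosed.exists_pow_nat_eq (z j) (ha j)
    refine ⟨x, ?_, 1, one_ne_zero, fun i => by simp [hF, hx i]⟩
    rintro rfl
    exact hz (funext fun j => by simp [← hx j, (ha j).ne'])
end

section
/- Let q_0, …, q_n be positive integers with gcd(q_0, …, q_n) = 1. For each index i set d_i = gcd(q_0, …, q̂_i, …, q_n) (the gcd of the weights omitting q_i), a_i = lcm(d_0, …, d̂_i, …, d_n) (the lcm of the d_j omitting d_i), and a = lcm(d_0, …, d_n). Then: (1) for all i ≠ j, gcd(d_i, d_j) = 1 and d_j divides q_i; (2) for every i, a_i divides q_i, gcd(a_i, d_i) = 1, and a_i · d_i = a. -/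
/-!
Every `q_k` is divisible by `d_i` or by `d_j` (it is omitted from at most one of the two
gcds), so a common divisor of `d_i` and `d_j` divides `gcd(q_0, …, q_n) = 1`. Once the `d_i`
are pairwise coprime, their lcms are products, and the remaining identities are statements
about products.
-/

namespace Finset

variable {ι : Type*} [DecidableEq ι]

theorem gcd_erase_dvd {α : Type*} [CommMonoidWithZero α] [NormalizedGCDMonoid α]
    {s : Finset ι} {f : ι → α} {i j : ι} (hi : i ∈ s) (hij : i ≠ j) :
    (s.erase j).gcd f ∣ f i :=
  gcd_dvd (mem_erase.2 ⟨hij, hi⟩)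

theorem coprime_gcd_erase_of_gcd_eq_one_s8 {s : Finset ι} {f : ι → ℕ} (h : s.gcd f = 1)
    {i j : ι} (hij : i ≠ j) : Nat.Coprime ((s.erase i).gcd f) ((s.erase j).gcd f) := by
  rw [Nat.coprime_iff_gcd_eq_one, ← Nat.dvd_one, ← h]
  refine dvd_gcd fun k hk => ?_
  rcases eq_or_ne k i with rfl | hki
  · exact (Nat.gcd_dvd_right _ _).trans (gcd_erase_dvd hk hij)
  · exact (Nat.gcd_dvd_left _ _).trans (gcd_erase_dvd hk hki)

variable {s : Finset ι} {f : ι → ℕ}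

theorem lcm_erase_mul_of_pairwise_coprime (h : (s : Set ι).Pairwise (Nat.Coprime.onFun f))
    {i : ι} (hi : i ∈ s) : (s.erase i).lcm f * f i = s.lcm f := by
  rw [lcm_eq_prod h, lcm_eq_prod (h.mono (coe_subset.2 (erase_subset i s))),
    prod_erase_mul _ _ hi]

theorem coprime_lcm_erase_of_pairwise_coprime (h : (s : Set ι).Pairwise (Nat.Coprime.onFun f))
    {i : ι} (hi : i ∈ s) : Nat.Coprime ((s.erase i).lcm f) (f i) := by
  rw [lcm_eq_prod (h.mono (coe_subset.2 (erase_subset i s)))]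
  exact Nat.Coprime.prod_left fun j hj => h (mem_of_mem_erase hj) hi (ne_of_mem_erase hj)

end Finset

theorem weights_gcd_lcm_relations_general {n : ℕ} (q : Fin (n + 1) → ℕ)
    (hred : Finset.univ.gcd q = 1)
    (d : Fin (n + 1) → ℕ) (hd : ∀ i, d i = (Finset.univ.erase i).gcd q)
    (a' : Fin (n + 1) → ℕ) (ha' : ∀ i, a' i = (Finset.univ.erase i).lcm d)
    (a : ℕ) (ha : a = Finset.univ.lcm d) :
    (∀ i j : Fin (n + 1), i ≠ j → Nat.Coprime (d i) (d j) ∧ d j ∣ q i) ∧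
    (∀ i : Fin (n + 1), a' i ∣ q i ∧ Nat.Coprime (a' i) (d i) ∧ a' i * d i = a) := by
  have hdvd : ∀ i j, i ≠ j → d j ∣ q i := fun i j hij =>
    hd j ▸ Finset.gcd_erase_dvd (Finset.mem_univ i) hij
  have hcop : ∀ i j, i ≠ j → Nat.Coprime (d i) (d j) := fun i j hij =>
    hd i ▸ hd j ▸ Finset.coprime_gcd_erase_of_gcd_eq_one_s8 hred hij
  have hpair : ((Finset.univ : Finset (Fin (n + 1))) : Set (Fin (n + 1))).Pairwise
      (Nat.Coprime.onFun d) := fun i _ j _ => hcop i j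
  refine ⟨fun i j hij => ⟨hcop i j hij, hdvd i j hij⟩, fun i => ⟨?_, ?_, ?_⟩⟩
  · exact ha' i ▸ Finset.lcm_dvd fun j hj => hdvd i j (Finset.ne_of_mem_erase hj).symm
  · exact ha' i ▸ Finset.coprime_lcm_erase_of_pairwise_coprime hpair (Finset.mem_univ i)
  · rw [ha', ha]
    exact Finset.lcm_erase_mul_of_pairwise_coprime hpair (Finset.mem_univ i)

/-- Let `q_0, …, q_n` be positive integers with `gcd(q_0, …, q_n) = 1`.  With
`d_i = gcd(q_0, …, q̂_i, …, q_n)`, `a_i = lcm(d_0, …, d̂_i, …, d_n)` and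
`a = lcm(d_0, …, d_n)`, one has: (1) for `i ≠ j`, `gcd(d_i, d_j) = 1` and `d_j ∣ q_i`;
(2) for every `i`, `a_i ∣ q_i`, `gcd(a_i, d_i) = 1` and `a_i · d_i = a`. -/
theorem weights_gcd_lcm_relations {n : ℕ} (q : Fin (n + 1) → ℕ) (hq : ∀ i, 0 < q i)
    (hred : Finset.univ.gcd q = 1)
    (d : Fin (n + 1) → ℕ) (hd : ∀ i, d i = (Finset.univ.erase i).gcd q)
    (a' : Fin (n + 1) → ℕ) (ha' : ∀ i, a' i = (Finset.univ.erase i).lcm d)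
    (a : ℕ) (ha : a = Finset.univ.lcm d) :
    (∀ i j : Fin (n + 1), i ≠ j → Nat.Coprime (d i) (d j) ∧ d j ∣ q i) ∧
    (∀ i : Fin (n + 1), a' i ∣ q i ∧ Nat.Coprime (a' i) (d i) ∧ a' i * d i = a) :=
  weights_gcd_lcm_relations_general q hred d hd a' ha' a ha
end

section
/- Let k be a field, w = (q_0, …, q_n) positive integer weights, and fix an index i. Define the i-th chart map of the weighted blow-up φ^i : k^{n+1} → k^{n+1} by (φ^i(x))_i = x_i^{q_i} and (φ^i(x))_j = x_i^{q_j} x_j for j ≠ i. Then for all x, y ∈ k^{n+1} with x_i ≠ 0: φ^i(x) = φ^i(y) if and only if there exists ξ ∈ k with ξ^{q_i} = 1 such that y_i = ξ^{-1} x_i and y_j = ξ^{q_j} x_j for all j ≠ i. -/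
/-! Given `φ^i(x) = φ^i(y)` with `x_i ≠ 0`, the `i`-th coordinate gives `x_i^{q_i} = y_i^{q_i}`, so
`y_i ≠ 0` and `ξ = x_i / y_i` is a `q_i`-th root of unity; dividing `x_i^{q_j} x_j = y_i^{q_j} y_j`
by `y_i^{q_j}` gives `y_j = ξ^{q_j} x_j`. Conversely, the factors `ξ^{∓q_j}` cancel in every
coordinate of `φ^i`. -/

section

variable {ι k : Type*} [DecidableEq ι] [Field k]

def weightedChart (q : ι → ℕ) (i : ι) (x : ι → k) : ι → k :=
  fun j => if j = i then x i ^ q i else x i ^ q j * x j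

variable {q : ι → ℕ} {i : ι} {x y : ι → k}

theorem weightedChart_eq_of_twist {ξ : k} (hqi : q i ≠ 0) (hξ : ξ ^ q i = 1)
    (hyi : y i = ξ⁻¹ * x i) (hy : ∀ j ≠ i, y j = ξ ^ q j * x j) :
    weightedChart q i y = weightedChart q i x := by
  have hξ0 : ξ ≠ 0 := by
    rintro rfl
    simp [zero_pow hqi] at hξ
  funext j
  rcases eq_or_ne j i with rfl | hj
  · simp [weightedChart, hyi, mul_pow, hξ]
  · simp only [weightedChart, if_neg hj, hyi, hy j hj, mul_pow, inv_pow]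
    field_simp

theorem exists_twist_of_weightedChart_eq (hqi : q i ≠ 0) (hx : x i ≠ 0)
    (h : weightedChart q i x = weightedChart q i y) :
    ∃ ξ : k, ξ ^ q i = 1 ∧ y i = ξ⁻¹ * x i ∧ ∀ j ≠ i, y j = ξ ^ q j * x j := by
  have hi : x i ^ q i = y i ^ q i := by simpa [weightedChart] using congrFun h i
  have hy : y i ≠ 0 := fun h0 => hx <| (pow_eq_zero_iff hqi).1 (by rw [hi, h0, zero_pow hqi])
  refine ⟨x i / y i, by rw [div_pow, hi, div_self (pow_ne_zero _ hy)], by field_simp,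
    fun j hj => ?_⟩
  have hj' : x i ^ q j * x j = y i ^ q j * y j := by
    simpa [weightedChart, hj] using congrFun h j
  rw [div_pow, div_mul_eq_mul_div, eq_div_iff (pow_ne_zero _ hy), hj', mul_comm]

end

/-- The `i`-th chart map of the weighted blow-up, `φ^i(x)_i = x_i^{q_i}` and
`φ^i(x)_j = x_i^{q_j} x_j` for `j ≠ i`, identifies exactly the tuples differing by the
`μ_{q_i}`-action: for `x_i ≠ 0`, `φ^i(x) = φ^i(y)` iff there is `ξ` with `ξ^{q_i} = 1`,
`y_i = ξ⁻¹ x_i` and `y_j = ξ^{q_j} x_j` for all `j ≠ i`. -/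
theorem blowup_chart_fibers {k : Type*} [Field k] {n : ℕ}
    (q : Fin (n + 1) → ℕ) (hq : ∀ i, 0 < q i) (i : Fin (n + 1))
    (phi : (Fin (n + 1) → k) → (Fin (n + 1) → k))
    (hphi : ∀ x j, phi x j = if j = i then x i ^ q i else x i ^ q j * x j)
    (x y : Fin (n + 1) → k) (hx : x i ≠ 0) :
    phi x = phi y ↔
      ∃ xi : k, xi ^ q i = 1 ∧ y i = xi⁻¹ * x i ∧ ∀ j, j ≠ i → y j = xi ^ q j * x j := by
  obtain rfl : phi = weightedChart q i := funext fun x => funext (hphi x)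
  have hqi : q i ≠ 0 := (hq i).ne'
  exact ⟨exists_twist_of_weightedChart_eq hqi hx,
    fun ⟨_, hξ, hyi, hy⟩ => (weightedChart_eq_of_twist hqi hξ hyi hy).symm⟩
end
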